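/- Let E* be a set of unordered pairs {j,k}, j ≠ k, of indices in {1,…,d}, and suppose β̂ satisfies: (i) β̂_{jk} = β̂_{kj} = 0 for every pair {j,k} ∉ E*; (ii) β̂ restricted to the pairs in E* is a global minimizer of the restricted SpaCE JAM objective in which all blocks outside E* are constrained to be zero; and (iii) strict dual feasibility: for every pair {j,k} ∉ E*, ‖(1/n) Ψ_{jk}ᵀ r_j‖₂² + ‖(1/n) Ψ_{kj}ᵀ r_k‖₂² < n λ², where r_j = x_j − Σ_{l≠j} Ψ_{jl} β̂_{jl}. Then β̂ is a global minimizer of the full objective F, and every global minimizer β̃ of F satisfies β̃_{jk} = β̃_{kj} = 0 for all pairs {j,k} ∉ E*; hence the estimated edge set {(j,k) : ‖β̃_{jk}‖₂² + ‖β̃_{kj}‖₂² ≠ 0} is contained in E* for every global minimizer. -/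

import Mathlib

/-!
Let `r` be the residual at `β̂`. Any `β` splits as `β̂ + u + w`, where `w` collects the blocks of
`β` off `E*` and `u` is supported on `E*`. Expanding the quadratic loss around `β̂`, and using that
the penalty is additive over the disjoint supports of `β̂ + u` and `w`,
`F β - F β̂ ≥ [λ (P (β̂ + u) - P β̂) - ⟨r, A u⟩ / n] + [λ P w - ⟨r, A w⟩ / n]`.
The first bracket is nonnegative by first-order optimality of `β̂` on the restricted problem
(compare `F (β̂ + t u)` with `F β̂` as `t → 0⁺`, using convexity of `P`). The second is a sum over
pairs `{j, k} ∉ E*`; by Cauchy–Schwarz and `‖Ψ_{jk} v‖² = n ‖v‖²`, strict dual feasibility makes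
each summand positive as soon as `(w_{jk}, w_{kj}) ≠ 0`. Hence `β̂` is a global minimizer, and a
global minimizer with a nonzero block off `E*` would have strictly larger objective than `β̂`.
-/

open Matrix
open scoped Classical

/-- Squared Euclidean norm ‖v‖₂² of a vector in ℝ^n. -/
noncomputable def sqNorm {n : ℕ} (v : Fin n → ℝ) : ℝ := ∑ i, v i ^ 2

/-- The SpaCE JAM objective
F(β) = (1/(2n)) Σ_j ‖x_j − Σ_{k≠j} Ψ_{jk}β_{jk}‖₂²
       + λ Σ_{k>j} (‖Ψ_{jk}β_{jk}‖₂² + ‖Ψ_{kj}β_{kj}‖₂²)^{1/2}. -/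
noncomputable def spaceJamObj (n r d : ℕ) (lam : ℝ)
    (x : Fin d → Fin n → ℝ)
    (Ψ : Fin d → Fin d → Matrix (Fin n) (Fin r) ℝ)
    (β : Fin d → Fin d → Fin r → ℝ) : ℝ :=
  (1 / (2 * (n : ℝ))) * ∑ j, sqNorm (fun i =>
      x j i - ∑ k ∈ Finset.univ.filter (fun k => k ≠ j), (Ψ j k).mulVec (β j k) i)
  + lam * ∑ p ∈ Finset.univ.filter (fun p : Fin d × Fin d => p.1 < p.2),
      Real.sqrt (sqNorm ((Ψ p.1 p.2).mulVec (β p.1 p.2))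
        + sqNorm ((Ψ p.2 p.1).mulVec (β p.2 p.1)))

open Finset

lemma sqNorm_eq_dotProduct_self {n : ℕ} (v : Fin n → ℝ) : sqNorm v = v ⬝ᵥ v := by
  simp only [sqNorm, dotProduct, sq]

lemma sqNorm_nonneg {n : ℕ} (v : Fin n → ℝ) : 0 ≤ sqNorm v :=
  sum_nonneg fun _ _ => sq_nonneg _

lemma sqNorm_pos {n : ℕ} {v : Fin n → ℝ} (hv : v ≠ 0) : 0 < sqNorm v := by
  simpa [sqNorm_eq_dotProduct_self] using dotProduct_self_star_pos_iff.2 hv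

lemma sqNorm_sub {n : ℕ} (a b : Fin n → ℝ) :
    sqNorm (a - b) = sqNorm a - 2 * (a ⬝ᵥ b) + sqNorm b := by
  simp only [sqNorm_eq_dotProduct_self, sub_dotProduct, dotProduct_sub, dotProduct_comm b a]
  ring

lemma sqNorm_smul {n : ℕ} (c : ℝ) (v : Fin n → ℝ) : sqNorm (c • v) = c ^ 2 * sqNorm v := by
  simp only [sqNorm_eq_dotProduct_self, smul_dotProduct, dotProduct_smul, smul_eq_mul]
  ring

lemma sqNorm_mulVec_of_transpose_mul_self {m n : ℕ} {M : Matrix (Fin m) (Fin n) ℝ} {c : ℝ}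
    (hM : Mᵀ * M = c • 1) (v : Fin n → ℝ) : sqNorm (M *ᵥ v) = c * sqNorm v := by
  rw [sqNorm_eq_dotProduct_self, dotProduct_mulVec, ← mulVec_transpose, mulVec_mulVec, hM,
    smul_mulVec, one_mulVec, smul_dotProduct, sqNorm_eq_dotProduct_self, smul_eq_mul]

noncomputable def pairNorm {m n : ℕ} (a : Fin m → ℝ) (b : Fin n → ℝ) : ℝ :=
  √(sqNorm a + sqNorm b)

section pairNorm
variable {m n : ℕ}

lemma pairNorm_eq_norm (a : Fin m → ℝ) (b : Fin n → ℝ) :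
    pairNorm a b = ‖(WithLp.toLp 2 (Sum.elim a b) : EuclideanSpace ℝ (Fin m ⊕ Fin n))‖ := by
  simp [pairNorm, sqNorm, EuclideanSpace.norm_eq, Fintype.sum_sum_type]

lemma pairNorm_add_le (a a' : Fin m → ℝ) (b b' : Fin n → ℝ) :
    pairNorm (a + a') (b + b') ≤ pairNorm a b + pairNorm a' b' := by
  simpa only [pairNorm_eq_norm, Sum.elim_add_add, WithLp.toLp_add] using norm_add_le _ _

lemma pairNorm_smul (c : ℝ) (a : Fin m → ℝ) (b : Fin n → ℝ) :
    pairNorm (c • a) (c • b) = |c| * pairNorm a b := by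
  have : Sum.elim (c • a) (c • b) = c • Sum.elim a b := by ext (i | i) <;> rfl
  rw [pairNorm_eq_norm, pairNorm_eq_norm, this, WithLp.toLp_smul, norm_smul, Real.norm_eq_abs]

lemma pairNorm_add_smul_le {t : ℝ} (ht₀ : 0 ≤ t) (ht₁ : t ≤ 1) (a c : Fin m → ℝ)
    (b e : Fin n → ℝ) :
    pairNorm (a + t • c) (b + t • e) ≤ (1 - t) * pairNorm a b + t * pairNorm (a + c) (b + e) := by
  calc pairNorm (a + t • c) (b + t • e)
      = pairNorm ((1 - t) • a + t • (a + c)) ((1 - t) • b + t • (b + e)) := by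
        congr 1 <;> module
    _ ≤ _ := by
        grw [pairNorm_add_le, pairNorm_smul, pairNorm_smul, abs_of_nonneg ht₀,
          abs_of_nonneg (sub_nonneg.2 ht₁)]

lemma dotProduct_add_dotProduct_le_pairNorm_mul (a a' : Fin m → ℝ) (b b' : Fin n → ℝ) :
    a ⬝ᵥ a' + b ⬝ᵥ b' ≤ pairNorm a b * pairNorm a' b' := by
  simpa [dotProduct, pairNorm, sqNorm, Fintype.sum_sum_type] using
    Real.sum_mul_le_sqrt_mul_sqrt univ (Sum.elim a b) (Sum.elim a' b')

lemma pairNorm_pos {a : Fin m → ℝ} {b : Fin n → ℝ} (h : ¬(a = 0 ∧ b = 0)) :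
    0 < pairNorm a b := by
  refine Real.sqrt_pos.2 ?_
  rcases not_and_or.1 h with ha | hb
  · exact add_pos_of_pos_of_nonneg (sqNorm_pos ha) (sqNorm_nonneg b)
  · exact add_pos_of_nonneg_of_pos (sqNorm_nonneg a) (sqNorm_pos hb)

end pairNorm

lemma pairNorm_mulVec {m n k : ℕ} {M₁ : Matrix (Fin m) (Fin k) ℝ} {M₂ : Matrix (Fin n) (Fin k) ℝ}
    {c : ℝ} (hc : 0 ≤ c) (h₁ : M₁ᵀ * M₁ = c • 1) (h₂ : M₂ᵀ * M₂ = c • 1) (w₁ w₂ : Fin k → ℝ) :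
    pairNorm (M₁ *ᵥ w₁) (M₂ *ᵥ w₂) = √c * pairNorm w₁ w₂ := by
  rw [pairNorm, sqNorm_mulVec_of_transpose_mul_self h₁, sqNorm_mulVec_of_transpose_mul_self h₂,
    ← mul_add, Real.sqrt_mul hc, pairNorm]

lemma mul_dotProduct_lt_mul_pairNorm {m n k : ℕ} {M₁ : Matrix (Fin m) (Fin k) ℝ}
    {M₂ : Matrix (Fin n) (Fin k) ℝ} {c lam : ℝ} (hc : 0 ≤ c) (hlam : 0 ≤ lam)
    (h₁ : M₁ᵀ * M₁ = c • 1) (h₂ : M₂ᵀ * M₂ = c • 1) {R₁ : Fin m → ℝ} {R₂ : Fin n → ℝ}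
    (hR : sqNorm ((1 / c) • (M₁ᵀ *ᵥ R₁)) + sqNorm ((1 / c) • (M₂ᵀ *ᵥ R₂)) < c * lam ^ 2)
    {w₁ w₂ : Fin k → ℝ} (hw : ¬(w₁ = 0 ∧ w₂ = 0)) :
    1 / c * (R₁ ⬝ᵥ M₁ *ᵥ w₁ + R₂ ⬝ᵥ M₂ *ᵥ w₂) < lam * pairNorm (M₁ *ᵥ w₁) (M₂ *ᵥ w₂) := by
  have hz : pairNorm ((1 / c) • (M₁ᵀ *ᵥ R₁)) ((1 / c) • (M₂ᵀ *ᵥ R₂)) < √c * lam := by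
    rw [← Real.sqrt_sq hlam, ← Real.sqrt_mul hc]
    exact Real.sqrt_lt_sqrt (add_nonneg (sqNorm_nonneg _) (sqNorm_nonneg _)) hR
  calc 1 / c * (R₁ ⬝ᵥ M₁ *ᵥ w₁ + R₂ ⬝ᵥ M₂ *ᵥ w₂)
      = (1 / c) • (M₁ᵀ *ᵥ R₁) ⬝ᵥ w₁ + (1 / c) • (M₂ᵀ *ᵥ R₂) ⬝ᵥ w₂ := by
        simp only [smul_dotProduct, mulVec_transpose, ← dotProduct_mulVec, smul_eq_mul, mul_add]
    _ ≤ pairNorm ((1 / c) • (M₁ᵀ *ᵥ R₁)) ((1 / c) • (M₂ᵀ *ᵥ R₂)) * pairNorm w₁ w₂ :=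
        dotProduct_add_dotProduct_le_pairNorm_mul _ _ _ _
    _ < √c * lam * pairNorm w₁ w₂ := mul_lt_mul_of_pos_right hz (pairNorm_pos hw)
    _ = lam * pairNorm (M₁ *ᵥ w₁) (M₂ *ᵥ w₂) := by rw [pairNorm_mulVec hc h₁ h₂]; ring

lemma nonneg_of_forall_mul_add_sq_mul_nonneg {a q : ℝ}
    (h : ∀ t : ℝ, 0 < t → t ≤ 1 → 0 ≤ t * a + t ^ 2 * q) : 0 ≤ a := by
  have hlim : Filter.Tendsto (fun t : ℝ => a + t * q) (nhdsWithin 0 (Set.Ioi 0)) (nhds a) := by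
    have : Continuous (fun t : ℝ => a + t * q) := by fun_prop
    simpa using (this.tendsto 0).mono_left nhdsWithin_le_nhds
  refine ge_of_tendsto hlim ?_
  filter_upwards [Ioc_mem_nhdsGT (zero_lt_one' ℝ)] with t ⟨ht₀, ht₁⟩
  nlinarith [h t ht₀ ht₁]

lemma sum_sum_ne_eq_sum_lt {ι M : Type*} [Fintype ι] [LinearOrder ι] [AddCommMonoid M]
    (f : ι → ι → M) :
    ∑ j, ∑ k ∈ univ.filter (fun k => k ≠ j), f j k
      = ∑ p ∈ univ.filter (fun p : ι × ι => p.1 < p.2), (f p.1 p.2 + f p.2 p.1) := by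
  have hswap : ∑ p ∈ univ.filter (fun p : ι × ι => p.1 < p.2), f p.2 p.1
      = ∑ p ∈ univ.filter (fun p : ι × ι => p.2 < p.1), f p.1 p.2 :=
    sum_equiv (Equiv.prodComm ι ι) (by simp) (by simp)
  rw [sum_add_distrib, hswap, sum_filter, sum_filter, ← sum_add_distrib,
    Fintype.sum_prod_type]
  refine sum_congr rfl fun j _ => ?_
  rw [sum_filter]
  refine sum_congr rfl fun k _ => ?_
  rcases lt_trichotomy j k with h | rfl | h
  · simp [h, h.ne', h.not_gt]
  · simp
  · simp [h, h.ne, h.not_gt]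

lemma transpose_mul_self_eq_smul_one {m k : ℕ} (hm : 0 < m) {M : Matrix (Fin m) (Fin k) ℝ}
    (h : (1 / (m : ℝ)) • (Mᵀ * M) = 1) : Mᵀ * M = (m : ℝ) • 1 := by
  rw [← h, smul_smul, mul_one_div_cancel (by positivity), one_smul]

namespace SpaceJam

variable {n r d : ℕ} (lam : ℝ) (x : Fin d → Fin n → ℝ)
  (Ψ : Fin d → Fin d → Matrix (Fin n) (Fin r) ℝ) (Estar : Set (Fin d × Fin d))

noncomputable def fit (j : Fin d) : (Fin d → Fin d → Fin r → ℝ) →ₗ[ℝ] Fin n → ℝ :=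
  ∑ k ∈ univ.filter (fun k => k ≠ j), (Ψ j k).mulVecLin ∘ₗ LinearMap.proj k ∘ₗ LinearMap.proj j

lemma fit_apply (j : Fin d) (β : Fin d → Fin d → Fin r → ℝ) :
    fit Ψ j β = ∑ k ∈ univ.filter (fun k => k ≠ j), Ψ j k *ᵥ β j k := by
  simp [fit]

noncomputable def residual (β : Fin d → Fin d → Fin r → ℝ) (j : Fin d) : Fin n → ℝ :=
  fun i => x j i - ∑ k ∈ univ.filter (fun k => k ≠ j), (Ψ j k *ᵥ β j k) i

lemma residual_eq_sub_fit (β : Fin d → Fin d → Fin r → ℝ) (j : Fin d) :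
    residual x Ψ β j = x j - fit Ψ j β := by
  ext i
  simp [residual, fit_apply, Finset.sum_apply]

noncomputable def penalty (β : Fin d → Fin d → Fin r → ℝ) : ℝ :=
  ∑ p ∈ univ.filter (fun p : Fin d × Fin d => p.1 < p.2),
    pairNorm (Ψ p.1 p.2 *ᵥ β p.1 p.2) (Ψ p.2 p.1 *ᵥ β p.2 p.1)

lemma spaceJamObj_eq (β : Fin d → Fin d → Fin r → ℝ) :
    spaceJamObj n r d lam x Ψ β
      = 1 / (2 * n) * ∑ j, sqNorm (residual x Ψ β j) + lam * penalty Ψ β :=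
  rfl

lemma spaceJamObj_add (β γ : Fin d → Fin d → Fin r → ℝ) :
    spaceJamObj n r d lam x Ψ (β + γ)
      = spaceJamObj n r d lam x Ψ β - 1 / n * ∑ j, residual x Ψ β j ⬝ᵥ fit Ψ j γ
        + 1 / (2 * n) * ∑ j, sqNorm (fit Ψ j γ) + lam * (penalty Ψ (β + γ) - penalty Ψ β) := by
  simp only [spaceJamObj_eq, residual_eq_sub_fit, map_add, ← sub_sub, sqNorm_sub,
    sum_add_distrib, sum_sub_distrib, ← mul_sum]
  ring

lemma penalty_add_smul_le (β u : Fin d → Fin d → Fin r → ℝ) {t : ℝ} (ht₀ : 0 ≤ t) (ht₁ : t ≤ 1) :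
    penalty Ψ (β + t • u) ≤ (1 - t) * penalty Ψ β + t * penalty Ψ (β + u) := by
  simp only [penalty, mul_sum, ← sum_add_distrib]
  refine sum_le_sum fun p _ => ?_
  simpa only [Pi.add_apply, Pi.smul_apply, mulVec_add, mulVec_smul] using
    pairNorm_add_smul_le ht₀ ht₁ _ _ _ _

lemma penalty_add_of_blocks_disjoint {v w : Fin d → Fin d → Fin r → ℝ}
    (h : ∀ j k, j ≠ k → (v j k = 0 ∧ v k j = 0) ∨ (w j k = 0 ∧ w k j = 0)) :
    penalty Ψ (v + w) = penalty Ψ v + penalty Ψ w := by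
  simp only [penalty, ← sum_add_distrib]
  refine sum_congr rfl fun p hp => ?_
  rcases h p.1 p.2 (mem_filter.1 hp).2.ne with ⟨h₁, h₂⟩ | ⟨h₁, h₂⟩ <;>
    simp [h₁, h₂, pairNorm, sqNorm]

/-- How far the dual certificate `(Ψ_{jk}ᵀ R_j / n)` stays below the penalty in direction `w`. -/
noncomputable def dualGap (R : Fin d → Fin n → ℝ) (w : Fin d → Fin d → Fin r → ℝ) : ℝ :=
  lam * penalty Ψ w - 1 / n * ∑ j, R j ⬝ᵥ fit Ψ j w

noncomputable def pairGap (R : Fin d → Fin n → ℝ) (w : Fin d → Fin d → Fin r → ℝ) (j k : Fin d) :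
    ℝ :=
  lam * pairNorm (Ψ j k *ᵥ w j k) (Ψ k j *ᵥ w k j)
    - 1 / n * (R j ⬝ᵥ Ψ j k *ᵥ w j k + R k ⬝ᵥ Ψ k j *ᵥ w k j)

lemma dualGap_eq_sum_pairGap (R : Fin d → Fin n → ℝ) (w : Fin d → Fin d → Fin r → ℝ) :
    dualGap lam Ψ R w
      = ∑ p ∈ univ.filter (fun p : Fin d × Fin d => p.1 < p.2), pairGap lam Ψ R w p.1 p.2 := by
  simp only [dualGap, pairGap, penalty, fit_apply, dotProduct_sum]
  rw [sum_sum_ne_eq_sum_lt (fun j k => R j ⬝ᵥ Ψ j k *ᵥ w j k), mul_sum, mul_sum,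
    sum_sub_distrib]

def StrictlyDualFeasible (R : Fin d → Fin n → ℝ) : Prop :=
  ∀ j k : Fin d, j ≠ k → (j, k) ∉ Estar →
    sqNorm ((1 / (n : ℝ)) • ((Ψ j k)ᵀ *ᵥ R j)) + sqNorm ((1 / (n : ℝ)) • ((Ψ k j)ᵀ *ᵥ R k))
      < n * lam ^ 2

def BlocksSupportedOn (β : Fin d → Fin d → Fin r → ℝ) : Prop :=
  ∀ j k : Fin d, j ≠ k → (j, k) ∉ Estar → β j k = 0

noncomputable def nonEdgeBlocks (β : Fin d → Fin d → Fin r → ℝ) : Fin d → Fin d → Fin r → ℝ :=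
  fun j k => if j ≠ k ∧ (j, k) ∉ Estar then β j k else 0

variable {lam x Ψ Estar}

lemma nonEdgeBlocks_of_mem (β : Fin d → Fin d → Fin r → ℝ) {j k : Fin d} (h : (j, k) ∈ Estar) :
    nonEdgeBlocks Estar β j k = 0 := by
  simp [nonEdgeBlocks, h]

lemma nonEdgeBlocks_of_notMem (β : Fin d → Fin d → Fin r → ℝ) {j k : Fin d} (hjk : j ≠ k)
    (h : (j, k) ∉ Estar) : nonEdgeBlocks Estar β j k = β j k := by
  simp [nonEdgeBlocks, hjk, h]

section dualCertificate

variable {R : Fin d → Fin n → ℝ} {w : Fin d → Fin d → Fin r → ℝ}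

lemma pairGap_pos (hlam : 0 ≤ lam)
    (horth : ∀ j k : Fin d, j ≠ k → (Ψ j k)ᵀ * Ψ j k = (n : ℝ) • 1)
    (hdual : StrictlyDualFeasible lam Ψ Estar R) {j k : Fin d} (hjk : j ≠ k)
    (hS : (j, k) ∉ Estar) (hw : ¬(w j k = 0 ∧ w k j = 0)) : 0 < pairGap lam Ψ R w j k :=
  sub_pos.2 <| mul_dotProduct_lt_mul_pairNorm n.cast_nonneg hlam (horth j k hjk)
    (horth k j hjk.symm) (hdual j k hjk hS) hw

lemma pairGap_nonneg (hlam : 0 ≤ lam)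
    (horth : ∀ j k : Fin d, j ≠ k → (Ψ j k)ᵀ * Ψ j k = (n : ℝ) • 1)
    (hsymm : ∀ j k : Fin d, (j, k) ∈ Estar ↔ (k, j) ∈ Estar)
    (hdual : StrictlyDualFeasible lam Ψ Estar R) (hw : ∀ j k : Fin d, (j, k) ∈ Estar → w j k = 0)
    {j k : Fin d} (hjk : j ≠ k) : 0 ≤ pairGap lam Ψ R w j k := by
  by_cases hzero : w j k = 0 ∧ w k j = 0
  · simp [pairGap, hzero.1, hzero.2, pairNorm, sqNorm]
  have hS : (j, k) ∉ Estar := fun h => hzero ⟨hw j k h, hw k j ((hsymm j k).1 h)⟩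
  exact (pairGap_pos hlam horth hdual hjk hS hzero).le

lemma dualGap_nonneg (hlam : 0 ≤ lam)
    (horth : ∀ j k : Fin d, j ≠ k → (Ψ j k)ᵀ * Ψ j k = (n : ℝ) • 1)
    (hsymm : ∀ j k : Fin d, (j, k) ∈ Estar ↔ (k, j) ∈ Estar)
    (hdual : StrictlyDualFeasible lam Ψ Estar R) (hw : ∀ j k : Fin d, (j, k) ∈ Estar → w j k = 0) :
    0 ≤ dualGap lam Ψ R w := by
  rw [dualGap_eq_sum_pairGap]
  exact sum_nonneg fun p hp => pairGap_nonneg hlam horth hsymm hdual hw (mem_filter.1 hp).2.ne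

lemma dualGap_pos (hlam : 0 ≤ lam)
    (horth : ∀ j k : Fin d, j ≠ k → (Ψ j k)ᵀ * Ψ j k = (n : ℝ) • 1)
    (hsymm : ∀ j k : Fin d, (j, k) ∈ Estar ↔ (k, j) ∈ Estar)
    (hdual : StrictlyDualFeasible lam Ψ Estar R) (hw : ∀ j k : Fin d, (j, k) ∈ Estar → w j k = 0)
    {j k : Fin d} (hjk : j ≠ k) (hS : (j, k) ∉ Estar) (hwjk : w j k ≠ 0) :
    0 < dualGap lam Ψ R w := by
  rw [dualGap_eq_sum_pairGap]
  refine sum_pos' (fun p hp => pairGap_nonneg hlam horth hsymm hdual hw (mem_filter.1 hp).2.ne) ?_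
  rcases hjk.lt_or_gt with h | h
  · exact ⟨(j, k), by simpa using h, pairGap_pos hlam horth hdual hjk hS fun h' => hwjk h'.1⟩
  · exact ⟨(k, j), by simpa using h, pairGap_pos hlam horth hdual hjk.symm
      (fun h' => hS ((hsymm k j).1 h')) fun h' => hwjk h'.2⟩

end dualCertificate

section witness

variable {βh : Fin d → Fin d → Fin r → ℝ}

/-- First-order optimality of `βh` for the restricted problem, in a direction `u`. -/
lemma dotProduct_fit_le_penalty_sub (hlam : 0 ≤ lam) (hsupp : BlocksSupportedOn Estar βh)
    (hmin : ∀ β, BlocksSupportedOn Estar β →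
      spaceJamObj n r d lam x Ψ βh ≤ spaceJamObj n r d lam x Ψ β)
    {u : Fin d → Fin d → Fin r → ℝ} (hu : BlocksSupportedOn Estar u) :
    1 / n * ∑ j, residual x Ψ βh j ⬝ᵥ fit Ψ j u ≤ lam * (penalty Ψ (βh + u) - penalty Ψ βh) := by
  refine sub_nonneg.1 (nonneg_of_forall_mul_add_sq_mul_nonneg
    (q := 1 / (2 * n) * ∑ j, sqNorm (fit Ψ j u)) fun t ht₀ ht₁ => ?_)
  have hmin_t := hmin (βh + t • u) fun j k hjk hS => by
    simp [hsupp j k hjk hS, hu j k hjk hS]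
  have hconv := mul_le_mul_of_nonneg_left (penalty_add_smul_le Ψ βh u ht₀.le ht₁) hlam
  rw [spaceJamObj_add] at hmin_t
  simp only [map_smul, dotProduct_smul, sqNorm_smul, smul_eq_mul, ← mul_sum] at hmin_t
  linarith

lemma spaceJamObj_add_dualGap_le (hlam : 0 ≤ lam)
    (hsymm : ∀ j k : Fin d, (j, k) ∈ Estar ↔ (k, j) ∈ Estar) (hsupp : BlocksSupportedOn Estar βh)
    (hmin : ∀ β, BlocksSupportedOn Estar β →
      spaceJamObj n r d lam x Ψ βh ≤ spaceJamObj n r d lam x Ψ β)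
    (β : Fin d → Fin d → Fin r → ℝ) :
    spaceJamObj n r d lam x Ψ βh + dualGap lam Ψ (residual x Ψ βh) (nonEdgeBlocks Estar β)
      ≤ spaceJamObj n r d lam x Ψ β := by
  set w := nonEdgeBlocks Estar β
  set u := β - βh - w
  have hu : BlocksSupportedOn Estar u := fun j k hjk hS => by
    simp [u, w, nonEdgeBlocks_of_notMem β hjk hS, hsupp j k hjk hS]
  have hdisj : ∀ j k, j ≠ k →
      ((βh + u) j k = 0 ∧ (βh + u) k j = 0) ∨ (w j k = 0 ∧ w k j = 0) := by
    intro j k hjk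
    by_cases hS : (j, k) ∈ Estar
    · exact Or.inr ⟨nonEdgeBlocks_of_mem β hS, nonEdgeBlocks_of_mem β ((hsymm j k).1 hS)⟩
    · have hS' : (k, j) ∉ Estar := fun h => hS ((hsymm k j).1 h)
      exact Or.inl ⟨by simp [hsupp j k hjk hS, hu j k hjk hS],
        by simp [hsupp k j hjk.symm hS', hu k j hjk.symm hS']⟩
  have hquad : 0 ≤ 1 / (2 * (n : ℝ)) * ∑ j, sqNorm (fit Ψ j (u + w)) :=
    mul_nonneg (by positivity) (sum_nonneg fun j _ => sqNorm_nonneg _)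
  have hfirst := dotProduct_fit_le_penalty_sub hlam hsupp hmin hu
  have hβ : β = βh + (u + w) := by simp [u]
  clear_value u w
  subst hβ
  rw [spaceJamObj_add, ← add_assoc, penalty_add_of_blocks_disjoint Ψ hdisj]
  simp only [map_add, dotProduct_add, sum_add_distrib, dualGap] at hquad ⊢
  linarith

end witness

end SpaceJam

open SpaceJam

theorem spaceJam_primal_dual_witness_general
    (n r d : ℕ) (hn : 0 < n) (lam : ℝ) (hlam : 0 < lam)
    (x : Fin d → Fin n → ℝ)
    (Ψ : Fin d → Fin d → Matrix (Fin n) (Fin r) ℝ)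
    (horth : ∀ j k : Fin d, j ≠ k → (1 / (n : ℝ)) • ((Ψ j k)ᵀ * Ψ j k) = 1)
    (Estar : Set (Fin d × Fin d))
    (hsymm : ∀ j k : Fin d, (j, k) ∈ Estar ↔ (k, j) ∈ Estar)
    (βh : Fin d → Fin d → Fin r → ℝ)
    (hsupp : ∀ j k : Fin d, j ≠ k → (j, k) ∉ Estar → βh j k = 0)
    (hrestrmin : ∀ β : Fin d → Fin d → Fin r → ℝ,
      (∀ j k : Fin d, j ≠ k → (j, k) ∉ Estar → β j k = 0) →
      spaceJamObj n r d lam x Ψ βh ≤ spaceJamObj n r d lam x Ψ β)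
    (hdual : ∀ j k : Fin d, j ≠ k → (j, k) ∉ Estar →
      sqNorm ((1 / (n : ℝ)) • (Ψ j k)ᵀ.mulVec (fun i =>
          x j i - ∑ l ∈ Finset.univ.filter (fun l => l ≠ j),
            (Ψ j l).mulVec (βh j l) i))
      + sqNorm ((1 / (n : ℝ)) • (Ψ k j)ᵀ.mulVec (fun i =>
          x k i - ∑ l ∈ Finset.univ.filter (fun l => l ≠ k),
            (Ψ k l).mulVec (βh k l) i))
        < n * lam ^ 2) :
    (∀ β, spaceJamObj n r d lam x Ψ βh ≤ spaceJamObj n r d lam x Ψ β)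
    ∧ (∀ βt : Fin d → Fin d → Fin r → ℝ,
        (∀ β, spaceJamObj n r d lam x Ψ βt ≤ spaceJamObj n r d lam x Ψ β) →
        (∀ j k : Fin d, j ≠ k → (j, k) ∉ Estar → βt j k = 0)
        ∧ {p : Fin d × Fin d | p.1 ≠ p.2 ∧
            ¬(βt p.1 p.2 = 0 ∧ βt p.2 p.1 = 0)} ⊆ Estar) := by
  have horth' : ∀ j k : Fin d, j ≠ k → (Ψ j k)ᵀ * Ψ j k = (n : ℝ) • 1 :=
    fun j k hjk => transpose_mul_self_eq_smul_one hn (horth j k hjk)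
  have hfeas : StrictlyDualFeasible lam Ψ Estar (residual x Ψ βh) := hdual
  have hgap := spaceJamObj_add_dualGap_le hlam.le hsymm hsupp hrestrmin
  refine ⟨fun β => le_of_add_le_of_nonneg_left (hgap β)
    (dualGap_nonneg hlam.le horth' hsymm hfeas fun _ _ => nonEdgeBlocks_of_mem β), fun βt hβt => ?_⟩
  have hzero : BlocksSupportedOn Estar βt := fun j k hjk hS => by
    by_contra hne
    have hpos := dualGap_pos hlam.le horth' hsymm hfeas (fun _ _ => nonEdgeBlocks_of_mem βt)
      hjk hS (by rwa [nonEdgeBlocks_of_notMem βt hjk hS])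
    linarith [hgap βt, hβt βh]
  exact ⟨hzero, fun p ⟨hne, hp⟩ => by_contra fun hS =>
    hp ⟨hzero _ _ hne hS, hzero _ _ hne.symm (mt (hsymm _ _).1 hS)⟩⟩

/-- **Primal–dual witness: strict dual feasibility certifies support recovery.**
Let E* be a symmetric set of (ordered versions of unordered) pairs.  If β̂
(i) vanishes on all blocks outside E*, (ii) globally minimizes F restricted to
coefficients supported on E*, and (iii) satisfies strict dual feasibility
‖(1/n)Ψ_{jk}ᵀr_j‖₂² + ‖(1/n)Ψ_{kj}ᵀr_k‖₂² < nλ² for every pair {j,k} ∉ E*,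
then β̂ is a global minimizer of F, and every global minimizer of F vanishes on
all blocks outside E*; hence the estimated edge set of any global minimizer is
contained in E*. -/
theorem spaceJam_primal_dual_witness
    (n r d : ℕ) (hn : 0 < n) (lam : ℝ) (hlam : 0 < lam)
    (x : Fin d → Fin n → ℝ)
    (Ψ : Fin d → Fin d → Matrix (Fin n) (Fin r) ℝ)
    (horth : ∀ j k : Fin d, j ≠ k → (1 / (n : ℝ)) • ((Ψ j k)ᵀ * Ψ j k) = 1)
    (Estar : Set (Fin d × Fin d))
    (hsymm : ∀ j k : Fin d, (j, k) ∈ Estar ↔ (k, j) ∈ Estar)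
    (hirrefl : ∀ j : Fin d, (j, j) ∉ Estar)
    (βh : Fin d → Fin d → Fin r → ℝ)
    (hsupp : ∀ j k : Fin d, j ≠ k → (j, k) ∉ Estar → βh j k = 0)
    (hrestrmin : ∀ β : Fin d → Fin d → Fin r → ℝ,
      (∀ j k : Fin d, j ≠ k → (j, k) ∉ Estar → β j k = 0) →
      spaceJamObj n r d lam x Ψ βh ≤ spaceJamObj n r d lam x Ψ β)
    (hdual : ∀ j k : Fin d, j ≠ k → (j, k) ∉ Estar →
      sqNorm ((1 / (n : ℝ)) • (Ψ j k)ᵀ.mulVec (fun i =>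
          x j i - ∑ l ∈ Finset.univ.filter (fun l => l ≠ j),
            (Ψ j l).mulVec (βh j l) i))
      + sqNorm ((1 / (n : ℝ)) • (Ψ k j)ᵀ.mulVec (fun i =>
          x k i - ∑ l ∈ Finset.univ.filter (fun l => l ≠ k),
            (Ψ k l).mulVec (βh k l) i))
        < n * lam ^ 2) :
    (∀ β, spaceJamObj n r d lam x Ψ βh ≤ spaceJamObj n r d lam x Ψ β)
    ∧ (∀ βt : Fin d → Fin d → Fin r → ℝ,
        (∀ β, spaceJamObj n r d lam x Ψ βt ≤ spaceJamObj n r d lam x Ψ β) →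
        (∀ j k : Fin d, j ≠ k → (j, k) ∉ Estar → βt j k = 0)
        ∧ {p : Fin d × Fin d | p.1 ≠ p.2 ∧
            ¬(βt p.1 p.2 = 0 ∧ βt p.2 p.1 = 0)} ⊆ Estar) :=
  spaceJam_primal_dual_witness_general n r d hn lam hlam x Ψ horth Estar hsymm βh hsupp hrestrmin
    hdual
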